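/- arXiv:2510.18349 — 3 statements merged into one kernel-verified Lean document; each statement's English description precedes it below -/
import Mathlib

section
/- Let n be a positive integer, E_n = n²/4, and c₊, c₋ real numbers with c := c₊c₋ > 0. Then for every real δ with δ² + 2√c ≤ n², the smaller eigenvalue λ⁻(δ) = E_n + δ² - √(n²δ² + c) of P_n(δ) satisfies λ⁻(δ) ≤ E_n - √c, with equality for δ = 0. Consequently, for all such δ neither eigenvalue of P_n(δ) lies in the open interval (E_n - √c, E_n + √c): in the leading order the perturbation opens a gap in the spectrum with branch points E_n ± √(c₊c₋). -/
/-- For `c = cpcm > 0` and `δ² + 2√c ≤ n²`, the smaller eigenvalue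
`λ⁻(δ) = E_n + δ² - √(n²δ² + c)` satisfies `λ⁻(δ) ≤ E_n - √c` (with equality at `δ = 0`),
and neither eigenvalue of `P_n(δ)` lies in the open gap `(E_n - √c, E_n + √c)`. -/
theorem perturbation_opens_gap (n : ℕ) (hn : 0 < n) (cp cm : ℝ) (hc : 0 < cp * cm)
    (δ : ℝ) (hδ : δ ^ 2 + 2 * Real.sqrt (cp * cm) ≤ (n : ℝ) ^ 2) :
    let En : ℝ := (n : ℝ) ^ 2 / 4
    let lamMinus : ℝ := En + δ ^ 2 - Real.sqrt ((n : ℝ) ^ 2 * δ ^ 2 + cp * cm)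
    let lamPlus : ℝ := En + δ ^ 2 + Real.sqrt ((n : ℝ) ^ 2 * δ ^ 2 + cp * cm)
    lamMinus ≤ En - Real.sqrt (cp * cm) ∧
    (δ = 0 → lamMinus = En - Real.sqrt (cp * cm)) ∧
    lamMinus ∉ Set.Ioo (En - Real.sqrt (cp * cm)) (En + Real.sqrt (cp * cm)) ∧
    lamPlus ∉ Set.Ioo (En - Real.sqrt (cp * cm)) (En + Real.sqrt (cp * cm)) := by
  intro En lamMinus lamPlus
  have hc' : (0:ℝ) ≤ cp * cm := le_of_lt hc
  have hsc : (0:ℝ) ≤ Real.sqrt (cp * cm) := Real.sqrt_nonneg _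
  have hd2 : (0:ℝ) ≤ δ ^ 2 := sq_nonneg δ
  have harg : (0:ℝ) ≤ (n : ℝ) ^ 2 * δ ^ 2 + cp * cm := by positivity
  have hkey : δ ^ 2 + Real.sqrt (cp * cm) ≤ Real.sqrt ((n : ℝ) ^ 2 * δ ^ 2 + cp * cm) := by
    rw [show Real.sqrt ((n : ℝ) ^ 2 * δ ^ 2 + cp * cm)
        = Real.sqrt ((n : ℝ) ^ 2 * δ ^ 2 + cp * cm) from rfl]
    have h1 : (δ ^ 2 + Real.sqrt (cp * cm)) ^ 2 ≤ (n : ℝ) ^ 2 * δ ^ 2 + cp * cm := by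
      have hs2 : Real.sqrt (cp * cm) ^ 2 = cp * cm := Real.sq_sqrt hc'
      have : δ ^ 2 * (δ ^ 2 + 2 * Real.sqrt (cp * cm)) ≤ δ ^ 2 * (n : ℝ) ^ 2 :=
        mul_le_mul_of_nonneg_left hδ hd2
      nlinarith
    calc δ ^ 2 + Real.sqrt (cp * cm)
        = Real.sqrt ((δ ^ 2 + Real.sqrt (cp * cm)) ^ 2) :=
          (Real.sqrt_sq (by positivity)).symm
      _ ≤ _ := Real.sqrt_le_sqrt h1
  have hminus : lamMinus ≤ En - Real.sqrt (cp * cm) := by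
    simp only [lamMinus, En]; linarith
  have hplus : En + Real.sqrt (cp * cm) ≤ lamPlus := by
    have : Real.sqrt (cp * cm) ≤ Real.sqrt ((n : ℝ) ^ 2 * δ ^ 2 + cp * cm) :=
      Real.sqrt_le_sqrt (by nlinarith)
    simp only [lamPlus, En]; linarith
  refine ⟨hminus, ?_, ?_, ?_⟩
  · intro h0
    simp only [lamMinus, En, h0]
    norm_num
  · intro hmem
    exact absurd hminus (not_le.mpr hmem.1)
  · intro hmem
    exact absurd hplus (not_le.mpr hmem.2)
end

section
/- Let n be a positive integer, E_n = n²/4, and c₊, c₋ real numbers with c := c₊c₋ < 0. For every real δ with n²δ² ≤ -c, the eigenvalues of P_n(δ) are the complex conjugate pair λ^{(±)}(δ) = E_n + δ² ± i√(-c - n²δ²), and each eigenvalue λ satisfies the parabola equation (Im λ)² + n²(Re λ - E_n) = -c together with E_n ≤ Re λ ≤ E_n + (-c)/n²; moreover λ is real if and only if n²δ² = -c, in which case λ = E_n + (-c)/n² is the unique real point of this band and is its point of maximal real part. -/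
/-!
`P_n(δ)` is `(E_n + δ²) • 1` plus a traceless matrix whose square is `(n²δ² + c) • 1`, so its
eigenvalues are `E_n + δ² ± r` with `r² = n²δ² + c ≤ 0`, i.e. `r = i√(-c - n²δ²)`. Eliminating `δ`
between `Re λ = E_n + δ²` and `(Im λ)² = -c - n²δ²` gives the parabola, and `0 ≤ δ² ≤ -c/n²`
gives the bounds on `Re λ`.
-/

open Complex

namespace Matrix

theorem exists_mulVec_eq_smul_iff_det_sub_smul_one {A ι : Type*} [CommRing A] [IsDomain A]
    [Fintype ι] [DecidableEq ι] (M : Matrix ι ι A) (μ : A) :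
    (∃ v : ι → A, v ≠ 0 ∧ M *ᵥ v = μ • v) ↔ (M - μ • 1).det = 0 := by
  simp only [← exists_mulVec_eq_zero_iff, sub_mulVec, smul_mulVec, one_mulVec, sub_eq_zero]

theorem det_fin_two_add_sub_sub_smul_one {A : Type*} [CommRing A] (a b p q μ : A) :
    (!![a + b, p; q, a - b] - μ • 1).det = (μ - a) ^ 2 - (b ^ 2 + p * q) := by
  rw [one_fin_two, smul_of, of_sub_of]
  simp only [smul_cons, smul_eq_mul, mul_one, mul_zero, smul_empty, sub_cons, head_cons, tail_cons,
    sub_zero, sub_self, zero_empty, det_fin_two_of]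
  ring

theorem exists_mulVec_eq_smul_fin_two_iff {A : Type*} [CommRing A] [IsDomain A] {a b p q r : A}
    (hr : r ^ 2 = b ^ 2 + p * q) (μ : A) :
    (∃ v : Fin 2 → A, v ≠ 0 ∧ !![a + b, p; q, a - b] *ᵥ v = μ • v) ↔ μ = a + r ∨ μ = a - r := by
  rw [exists_mulVec_eq_smul_iff_det_sub_smul_one, det_fin_two_add_sub_sub_smul_one, ← hr,
    sub_eq_zero, sq_eq_sq_iff_eq_or_eq_neg, sub_eq_iff_eq_add', sub_eq_iff_eq_add', ← sub_eq_add_neg]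

end Matrix

theorem Complex.re_eq_and_im_sq_eq_of_eq_add_or_sub_I_mul {a s : ℝ} {μ : ℂ}
    (h : μ = a + I * s ∨ μ = a - I * s) : μ.re = a ∧ μ.im ^ 2 = s ^ 2 := by
  rcases h with rfl | rfl <;> simp

theorem Complex.parabola_band_of_re_of_im_sq {E c k t : ℝ} (hk : 0 < k) (ht : 0 ≤ t) {μ : ℂ}
    (hre : μ.re = E + t) (him : μ.im ^ 2 = c - k * t) :
    μ.im ^ 2 + k * (μ.re - E) = c ∧ E ≤ μ.re ∧ μ.re ≤ E + c / k ∧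
      (μ.im = 0 ↔ k * t = c) ∧ (k * t = c → μ = ((E + c / k : ℝ) : ℂ)) := by
  have htc : t = c / k ↔ k * t = c := by rw [eq_div_iff hk.ne', mul_comm]
  have hkt : k * t ≤ c := by nlinarith [sq_nonneg μ.im]
  have him_zero : μ.im = 0 ↔ k * t = c := by
    rw [← sq_eq_zero_iff (M₀ := ℝ), him, sub_eq_zero, eq_comm]
  refine ⟨by rw [him, hre]; ring, by linarith, ?_, him_zero, fun h => ?_⟩
  · rw [hre, add_le_add_iff_left, le_div_iff₀ hk]; linarith
  · apply ext <;> simp [hre, htc.2 h, him_zero.2 h]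

theorem band_for_negative_product_general (n : ℕ) (hn : 0 < n) (cp cm : ℝ)
    (δ : ℝ) (hδ : (n : ℝ) ^ 2 * δ ^ 2 ≤ -(cp * cm)) :
    let En : ℝ := (n : ℝ) ^ 2 / 4
    let P : Matrix (Fin 2) (Fin 2) ℂ :=
      !![((En + δ ^ 2 + (n : ℝ) * δ : ℝ) : ℂ), (cp : ℂ);
         (cm : ℂ), ((En + δ ^ 2 - (n : ℝ) * δ : ℝ) : ℂ)]
    let lamP : ℂ :=
      ((En + δ ^ 2 : ℝ) : ℂ) + Complex.I * (Real.sqrt (-(cp * cm) - (n : ℝ) ^ 2 * δ ^ 2) : ℂ)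
    let lamM : ℂ :=
      ((En + δ ^ 2 : ℝ) : ℂ) - Complex.I * (Real.sqrt (-(cp * cm) - (n : ℝ) ^ 2 * δ ^ 2) : ℂ)
    (∀ μ : ℂ, (∃ v : Fin 2 → ℂ, v ≠ 0 ∧ P.mulVec v = μ • v) ↔ (μ = lamP ∨ μ = lamM)) ∧
    lamM = starRingEnd ℂ lamP ∧
    (∀ μ : ℂ, (∃ v : Fin 2 → ℂ, v ≠ 0 ∧ P.mulVec v = μ • v) →
      μ.im ^ 2 + (n : ℝ) ^ 2 * (μ.re - En) = -(cp * cm) ∧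
      En ≤ μ.re ∧ μ.re ≤ En + (-(cp * cm)) / (n : ℝ) ^ 2 ∧
      (μ.im = 0 ↔ (n : ℝ) ^ 2 * δ ^ 2 = -(cp * cm)) ∧
      ((n : ℝ) ^ 2 * δ ^ 2 = -(cp * cm) →
        μ = ((En + (-(cp * cm)) / (n : ℝ) ^ 2 : ℝ) : ℂ))) := by
  intro En P lamP lamM
  set s := √(-(cp * cm) - (n : ℝ) ^ 2 * δ ^ 2)
  have hs : s ^ 2 = -(cp * cm) - (n : ℝ) ^ 2 * δ ^ 2 := Real.sq_sqrt (by linarith)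
  have hev (μ : ℂ) : (∃ v : Fin 2 → ℂ, v ≠ 0 ∧ P.mulVec v = μ • v) ↔ μ = lamP ∨ μ = lamM := by
    have hP : P = !![((En + δ ^ 2 : ℝ) : ℂ) + ((n * δ : ℝ) : ℂ), cp;
        cm, ((En + δ ^ 2 : ℝ) : ℂ) - ((n * δ : ℝ) : ℂ)] := by
      simp only [P, ofReal_add, ofReal_sub]
    rw [hP]
    refine Matrix.exists_mulVec_eq_smul_fin_two_iff ?_ μ
    rw [mul_pow, I_sq, ← ofReal_pow, hs]
    push_cast
    ring
  refine ⟨hev, by simp [lamP, lamM, sub_eq_add_neg], fun μ hμ => ?_⟩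
  obtain ⟨hre, him⟩ := re_eq_and_im_sq_eq_of_eq_add_or_sub_I_mul ((hev μ).1 hμ)
  exact parabola_band_of_re_of_im_sq (by positivity) (sq_nonneg δ) hre (by rw [him, hs])

/-- For `c = cpcm < 0` and real `δ` with `n²δ² ≤ -c`, the eigenvalues of the
near-resonant block are the complex conjugate pair `E_n + δ² ± i√(-c - n²δ²)`; each
eigenvalue `λ` lies on the parabola `(Im λ)² + n²(Re λ - E_n) = -c` with
`E_n ≤ Re λ ≤ E_n + (-c)/n²`, and `λ` is real iff `n²δ² = -c`, in which case
`λ = E_n + (-c)/n²`, the point of maximal real part of the band. -/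
theorem band_for_negative_product (n : ℕ) (hn : 0 < n) (cp cm : ℝ) (hc : cp * cm < 0)
    (δ : ℝ) (hδ : (n : ℝ) ^ 2 * δ ^ 2 ≤ -(cp * cm)) :
    let En : ℝ := (n : ℝ) ^ 2 / 4
    let P : Matrix (Fin 2) (Fin 2) ℂ :=
      !![((En + δ ^ 2 + (n : ℝ) * δ : ℝ) : ℂ), (cp : ℂ);
         (cm : ℂ), ((En + δ ^ 2 - (n : ℝ) * δ : ℝ) : ℂ)]
    let lamP : ℂ :=
      ((En + δ ^ 2 : ℝ) : ℂ) + Complex.I * (Real.sqrt (-(cp * cm) - (n : ℝ) ^ 2 * δ ^ 2) : ℂ)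
    let lamM : ℂ :=
      ((En + δ ^ 2 : ℝ) : ℂ) - Complex.I * (Real.sqrt (-(cp * cm) - (n : ℝ) ^ 2 * δ ^ 2) : ℂ)
    (∀ μ : ℂ, (∃ v : Fin 2 → ℂ, v ≠ 0 ∧ P.mulVec v = μ • v) ↔ (μ = lamP ∨ μ = lamM)) ∧
    lamM = starRingEnd ℂ lamP ∧
    (∀ μ : ℂ, (∃ v : Fin 2 → ℂ, v ≠ 0 ∧ P.mulVec v = μ • v) →
      μ.im ^ 2 + (n : ℝ) ^ 2 * (μ.re - En) = -(cp * cm) ∧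
      En ≤ μ.re ∧ μ.re ≤ En + (-(cp * cm)) / (n : ℝ) ^ 2 ∧
      (μ.im = 0 ↔ (n : ℝ) ^ 2 * δ ^ 2 = -(cp * cm)) ∧
      ((n : ℝ) ^ 2 * δ ^ 2 = -(cp * cm) →
        μ = ((En + (-(cp * cm)) / (n : ℝ) ^ 2 : ℝ) : ℂ))) :=
  band_for_negative_product_general n hn cp cm δ hδ
end

section
/- Let n be a positive integer and c₊, c₋, δ, λ̃ ∈ ℂ with λ̃² = n²δ² + c₊c₋ and c₊ ≠ 0. Define Ψ(x) = [-c₊ e^{inx/2} + (nδ - λ̃) e^{-inx/2}] e^{iδx} for x ∈ ℝ. Then for any x ∈ ℝ, Ψ(x) = 0 if and only if λ̃ = -(c₊ e^{inx} + c₋ e^{-inx})/2 and nδ = (c₊ e^{inx} - c₋ e^{-inx})/2. -/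
/-- For `λ̃² = n²δ² + cpcm` and `cp ≠ 0`, the leading-order Bloch eigenfunction
`Ψ(x) = [-cp e^{inx/2} + (nδ - λ̃) e^{-inx/2}] e^{iδx}` vanishes at `x` iff
`λ̃ = -(cp e^{inx} + cm e^{-inx})/2` and `nδ = (cp e^{inx} - cm e^{-inx})/2`. -/
theorem bloch_function_zero_condition (n : ℕ) (hn : 0 < n) (cp cm δ lam : ℂ)
    (hlam : lam ^ 2 = (n : ℂ) ^ 2 * δ ^ 2 + cp * cm) (hne : cp ≠ 0) (x : ℝ) :
    (-cp * Complex.exp (Complex.I * (n : ℂ) * (x : ℂ) / 2)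
        + ((n : ℂ) * δ - lam) * Complex.exp (-(Complex.I * (n : ℂ) * (x : ℂ) / 2)))
      * Complex.exp (Complex.I * δ * (x : ℂ)) = 0
    ↔ (lam = -(cp * Complex.exp (Complex.I * (n : ℂ) * (x : ℂ))
            + cm * Complex.exp (-(Complex.I * (n : ℂ) * (x : ℂ)))) / 2 ∧
       (n : ℂ) * δ = (cp * Complex.exp (Complex.I * (n : ℂ) * (x : ℂ))
            - cm * Complex.exp (-(Complex.I * (n : ℂ) * (x : ℂ)))) / 2) := by
  set a := Complex.exp (Complex.I * (n : ℂ) * (x : ℂ) / 2) with ha_def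
  have ha : a ≠ 0 := Complex.exp_ne_zero _
  have hb : Complex.exp (Complex.I * (n : ℂ) * (x : ℂ)) = a * a := by
    rw [ha_def, ← Complex.exp_add]
    ring_nf
  have hinv : Complex.exp (-(Complex.I * (n : ℂ) * (x : ℂ) / 2)) = a⁻¹ := by
    rw [ha_def, Complex.exp_neg]
  have hinv2 : Complex.exp (-(Complex.I * (n : ℂ) * (x : ℂ))) = (a * a)⁻¹ := by
    rw [Complex.exp_neg, hb]
  have he : Complex.exp (Complex.I * δ * (x : ℂ)) ≠ 0 := Complex.exp_ne_zero _
  rw [hb, hinv, hinv2]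
  constructor
  · intro h
    have h0 : -cp * a + ((n : ℂ) * δ - lam) * a⁻¹ = 0 := by
      rcases mul_eq_zero.mp h with h' | h'
      · exact h'
      · exact absurd h' he
    have h1 : (n : ℂ) * δ - lam = cp * (a * a) := by
      field_simp at h0
      linear_combination h0
    have h2 : (n : ℂ) * δ + lam = -cm * (a * a)⁻¹ := by
      field_simp
      apply mul_left_cancel₀ hne
      linear_combination -((n : ℂ) * δ + lam) * h1 - hlam
    refine ⟨by linear_combination (h2 - h1) / 2, by linear_combination (h1 + h2) / 2⟩
  · rintro ⟨h1, h2⟩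
    apply mul_eq_zero_of_left
    have hd : (n : ℂ) * δ - lam = cp * (a * a) := by linear_combination h2 - h1
    rw [hd]
    field_simp
    ring
end
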